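/- Let N₊ = 2 and N₋ = 0. Then the ℂ-vector space ker d / im d is infinite-dimensional; in fact the cohomology classes of the monomials ψ₂^k, k = 0, 1, 2, …, are linearly independent in ker d / im d. -/
import Mathlib


/-!
D = 2, signature (1,1) supersymmetry algebra cohomology.
`R2 Np Nm = ℂ[ψ₁,…,ψ_{N₊}, χ₁,…,χ_{N₋}]`, `Om2` is the free module with basis
`{1, c̃₁, c̃₂, c̃₁c̃₂}`, and `d2` is the differential with `dc̃₁ = P`, `dc̃₂ = Q`.
-/

open MvPolynomial

noncomputable section

/-- The polynomial ring `ℂ[ψ₁,…,ψ_{N₊}, χ₁,…,χ_{N₋}]`; `Sum.inl i ↦ ψᵢ`, `Sum.inr i ↦ χᵢ`. -/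
abbrev R2 (Np Nm : ℕ) : Type := MvPolynomial (Fin Np ⊕ Fin Nm) ℂ

/-- `Ω`: free `R2`-module with basis `{1, c̃₁, c̃₂, c̃₁c̃₂}` (components 0,1,2,3). -/
abbrev Om2 (Np Nm : ℕ) : Type := Fin 4 → R2 Np Nm

/-- The ghost `ψᵢ`. -/
def ψ {Np Nm : ℕ} (i : Fin Np) : R2 Np Nm := X (Sum.inl i)

/-- The ghost `χᵢ`. -/
def χ {Np Nm : ℕ} (i : Fin Nm) : R2 Np Nm := X (Sum.inr i)

/-- `P = Σ ψᵢ²`. -/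
def Pp (Np Nm : ℕ) : R2 Np Nm := ∑ i, ψ i ^ 2

/-- `Q = Σ χᵢ²`. -/
def Qq (Np Nm : ℕ) : R2 Np Nm := ∑ i, χ i ^ 2

/-- The differential `d(ω₀ + c̃₁ω₁ + c̃₂ω₂ + c̃₁c̃₂ω₃) = Pω₁ + Qω₂ + (Pc̃₂ − Qc̃₁)ω₃`,
as a `ℂ`-linear map. -/
def d2L (Np Nm : ℕ) : Om2 Np Nm →ₗ[ℂ] Om2 Np Nm where
  toFun ω := ![Pp Np Nm * ω 1 + Qq Np Nm * ω 2, -(Qq Np Nm * ω 3), Pp Np Nm * ω 3, 0]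
  map_add' a b := by
    funext k
    fin_cases k <;>
      simp [Pi.add_apply, Matrix.cons_val_zero, Matrix.cons_val_one, Matrix.head_cons,
        mul_add] <;> ring
  map_smul' c a := by
    funext k
    fin_cases k <;>
      simp [Pi.smul_apply, Matrix.cons_val_zero, Matrix.cons_val_one, Matrix.head_cons,
        mul_smul_comm, smul_add]

/-- Embedding of `R` into `Ω` (coefficient of the basis element `1`). -/
def ofR {Np Nm : ℕ} (r : R2 Np Nm) : Om2 Np Nm := ![r, 0, 0, 0]

lemma d2L_ofR {Np Nm : ℕ} (r : R2 Np Nm) : d2L Np Nm (ofR r) = 0 := by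
  funext k
  fin_cases k <;>
    simp [d2L, ofR, Matrix.cons_val_zero, Matrix.cons_val_one, Matrix.head_cons]

/-- The image of `d`, as a submodule of the kernel of `d` (`d∘d = 0`). -/
def Bsub (Np Nm : ℕ) : Submodule ℂ (LinearMap.ker (d2L Np Nm)) :=
  Submodule.comap (LinearMap.ker (d2L Np Nm)).subtype (LinearMap.range (d2L Np Nm))

/-- The cohomology `ker d / im d` as a `ℂ`-vector space. -/
def Hco (Np Nm : ℕ) : Type := LinearMap.ker (d2L Np Nm) ⧸ Bsub Np Nm

noncomputable instance (Np Nm : ℕ) : AddCommGroup (Hco Np Nm) :=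
  Submodule.Quotient.addCommGroup _

instance (Np Nm : ℕ) : Module ℂ (Hco Np Nm) := Submodule.Quotient.module _

/-- The cohomology class of a cocycle. -/
def cls {Np Nm : ℕ} (x : Om2 Np Nm) (hx : d2L Np Nm x = 0) : Hco Np Nm :=
  Submodule.Quotient.mk ⟨x, LinearMap.mem_ker.mpr hx⟩


section Stmt14Aux

/-- Evaluation `ψ₁ ↦ i·X`, `ψ₂ ↦ X`, killing `P = ψ₁² + ψ₂²`. -/
def evalMap : R2 2 0 →ₐ[ℂ] Polynomial ℂ :=
  aeval (fun s => match s with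
    | Sum.inl 0 => Complex.I • Polynomial.X
    | Sum.inl 1 => Polynomial.X
    | Sum.inr i => i.elim0)

lemma evalMap_ψ0 : evalMap (ψ (0 : Fin 2)) = Complex.I • Polynomial.X := by
  rw [ψ, evalMap, aeval_X]

lemma evalMap_ψ1 : evalMap (ψ (1 : Fin 2)) = Polynomial.X := by
  rw [ψ, evalMap, aeval_X]

lemma evalMap_Pp : evalMap (Pp 2 0) = 0 := by
  rw [Pp, Fin.sum_univ_two, map_add, map_pow, map_pow, evalMap_ψ0, evalMap_ψ1,
    smul_pow, Complex.I_sq, neg_one_smul]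
  ring

lemma evalMap_Qq : evalMap (Qq 2 0) = 0 := by
  simp [Qq]

/-- The `ℂ`-linear map `Ω → ℂ[X]`, `ω ↦ evalMap (ω 0)`. -/
def Lev : Om2 2 0 →ₗ[ℂ] Polynomial ℂ :=
  evalMap.toLinearMap.comp (LinearMap.proj (R := ℂ) (0 : Fin 4))

lemma Bsub_le_ker :
    Bsub 2 0 ≤ LinearMap.ker (Lev.comp (LinearMap.ker (d2L 2 0)).subtype) := by
  rintro ⟨x, hx⟩ hmem
  obtain ⟨y, hy⟩ := hmem
  simp only [LinearMap.mem_ker, LinearMap.comp_apply, Submodule.subtype_apply]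
  have hx0 : x 0 = Pp 2 0 * y 1 + Qq 2 0 * y 2 := by
    have := congrFun hy 0
    simp [d2L] at this
    exact this.symm
  simp [Lev, hx0, map_add, map_mul, evalMap_Pp, evalMap_Qq]

/-- The induced map on cohomology. -/
def Hev : Hco 2 0 →ₗ[ℂ] Polynomial ℂ :=
  Submodule.liftQ (Bsub 2 0) (Lev.comp (LinearMap.ker (d2L 2 0)).subtype) Bsub_le_ker

lemma Hev_cls (r : R2 2 0) (hr : d2L 2 0 (ofR r) = 0) :
    Hev (cls (ofR r) hr) = evalMap r := by
  rw [Hev, cls]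
  erw [Submodule.liftQ_apply]

lemma Hev_comp :
    (fun k : ℕ => Hev (cls (ofR ((ψ 1 : R2 2 0) ^ k)) (d2L_ofR ((ψ 1 : R2 2 0) ^ k)))) =
      fun k : ℕ => Polynomial.X ^ k := by
  funext k
  rw [Hev_cls, map_pow, evalMap_ψ1]

lemma stmt14_li :
    LinearIndependent ℂ
      (fun k : ℕ => cls (ofR ((ψ 1 : R2 2 0) ^ k)) (d2L_ofR ((ψ 1 : R2 2 0) ^ k))) := by
  apply LinearIndependent.of_comp Hev
  have : (Hev ∘ fun k : ℕ => cls (ofR ((ψ 1 : R2 2 0) ^ k)) (d2L_ofR ((ψ 1 : R2 2 0) ^ k))) =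
      fun k : ℕ => Polynomial.X ^ k := Hev_comp
  rw [this]
  have h := (Polynomial.basisMonomials ℂ).linearIndependent
  have hco : ⇑(Polynomial.basisMonomials ℂ) = fun n : ℕ => (Polynomial.X : Polynomial ℂ) ^ n := by
    funext n
    rw [Polynomial.coe_basisMonomials, Polynomial.X_pow_eq_monomial]
  rwa [hco] at h

end Stmt14Aux

/-- for `N₊ = 2`, `N₋ = 0`, the cohomology `ker d / im d` is an
infinite-dimensional `ℂ`-vector space; in fact the classes of the monomials
`ψ₂^k`, `k = 0, 1, 2, …`, are linearly independent. -/
theorem stmt14 :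
    ¬ Module.Finite ℂ (Hco 2 0) ∧
    LinearIndependent ℂ
      (fun k : ℕ => cls (ofR ((ψ 1 : R2 2 0) ^ k)) (d2L_ofR ((ψ 1 : R2 2 0) ^ k))) := by
  refine ⟨fun hfin => ?_, stmt14_li⟩
  haveI := stmt14_li.finite
  exact not_finite ℕ
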